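/- arXiv:2212.00578 — 3 statements merged into one kernel-verified Lean document; each statement's English description precedes it below -/
import Mathlib

section
/- With s : (−x_u, x_q) → ℝ continuous and strictly decreasing, the critical prejudice τ^d defined by s(τ^d) = β = (x_u + c)/(x_q + x_u), and regret u(τ) = s(τ)(x_q + x_u) − x_u − 1{s(τ)(x_q+x_u) − x_u > c}·x for x ∈ {x_q, −x_u}: u is locally decreasing at every τ ≠ τ^d and has a jump discontinuity at τ^d. -/
open Set Filter Topology

/-!
The ex ante payoff `N τ = s τ (x_q + x_u) - x_u` is continuous and strictly decreasing, and it
crosses the cutoff `c` exactly at `τᵈ`. Hence the applicant is accepted left of `τᵈ` and rejected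
right of it, so the regret is `N - x` on the left and `N` on the right: strictly decreasing on
each side, with one-sided limits `c - x` and `c` at `τᵈ`.
-/

noncomputable def thresholdRegret {α : Type*} (f : α → ℝ) (c x : ℝ) (τ : α) : ℝ :=
  f τ - (if f τ > c then (1 : ℝ) else 0) * x

section ThresholdRegret

variable {α : Type*} [LinearOrder α] {D : Set α} {f : α → ℝ} {c x : ℝ} {τd : α}

theorem thresholdRegret_eqOn_Iio (hf : StrictAntiOn f D) (hτd : τd ∈ D) (hc : f τd = c) :
    EqOn (thresholdRegret f c x) (fun τ ↦ f τ - x) (Iio τd ∩ D) := by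
  rintro τ ⟨hlt, hτ⟩
  have hacc : f τ > c := hc ▸ hf hτ hτd hlt
  simp [thresholdRegret, hacc]

theorem thresholdRegret_eqOn_Ioi (hf : StrictAntiOn f D) (hτd : τd ∈ D) (hc : f τd = c) :
    EqOn (thresholdRegret f c x) f (Ioi τd ∩ D) := by
  rintro τ ⟨hgt, hτ⟩
  have hrej : ¬ f τ > c := not_lt.2 (hc ▸ hf hτd hτ hgt).le
  simp [thresholdRegret, hrej]

theorem strictAntiOn_thresholdRegret_Iio (hf : StrictAntiOn f D) (hτd : τd ∈ D)
    (hc : f τd = c) : StrictAntiOn (thresholdRegret f c x) (Iio τd ∩ D) := by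
  have hsub : StrictAntiOn (fun τ ↦ f τ + -x) (Iio τd ∩ D) :=
    (hf.mono inter_subset_right).add_const (-x)
  simp only [← sub_eq_add_neg] at hsub
  exact hsub.congr (thresholdRegret_eqOn_Iio hf hτd hc).symm

theorem strictAntiOn_thresholdRegret_Ioi (hf : StrictAntiOn f D) (hτd : τd ∈ D)
    (hc : f τd = c) : StrictAntiOn (thresholdRegret f c x) (Ioi τd ∩ D) :=
  (hf.mono inter_subset_right).congr (thresholdRegret_eqOn_Ioi hf hτd hc).symm

variable [TopologicalSpace α]

theorem tendsto_thresholdRegret_nhdsLT (hf : StrictAntiOn f D) (hD : D ∈ 𝓝 τd)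
    (hcont : ContinuousAt f τd) (hc : f τd = c) :
    Tendsto (thresholdRegret f c x) (𝓝[<] τd) (𝓝 (c - x)) := by
  have hlim : Tendsto (fun τ ↦ f τ - x) (𝓝[<] τd) (𝓝 (c - x)) :=
    (hc ▸ hcont.tendsto.sub_const x).mono_left nhdsWithin_le_nhds
  exact hlim.congr' <| (thresholdRegret_eqOn_Iio hf (mem_of_mem_nhds hD) hc).symm
    |>.eventuallyEq_of_mem (inter_mem_nhdsWithin _ hD)

theorem tendsto_thresholdRegret_nhdsGT (hf : StrictAntiOn f D) (hD : D ∈ 𝓝 τd)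
    (hcont : ContinuousAt f τd) (hc : f τd = c) :
    Tendsto (thresholdRegret f c x) (𝓝[>] τd) (𝓝 c) := by
  have hlim : Tendsto f (𝓝[>] τd) (𝓝 c) := (hc ▸ hcont.tendsto).mono_left nhdsWithin_le_nhds
  exact hlim.congr' <| (thresholdRegret_eqOn_Ioi hf (mem_of_mem_nhds hD) hc).symm
    |>.eventuallyEq_of_mem (inter_mem_nhdsWithin _ hD)

end ThresholdRegret

theorem exists_Ioo_subset_of_isOpen {U : Set ℝ} (hU : IsOpen U) {τ : ℝ} (hτ : τ ∈ U) :
    ∃ δ > 0, Ioo (τ - δ) (τ + δ) ⊆ U := by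
  obtain ⟨δ, hδ, hball⟩ := Metric.isOpen_iff.1 hU τ hτ
  exact ⟨δ, hδ, Real.ball_eq_Ioo τ δ ▸ hball⟩

theorem exists_Ioo_strictAntiOn_thresholdRegret {D : Set ℝ} {f : ℝ → ℝ} {c x τd : ℝ}
    (hD : IsOpen D) (hf : StrictAntiOn f D) (hτd : τd ∈ D) (hc : f τd = c)
    {τ : ℝ} (hτ : τ ∈ D) (hne : τ ≠ τd) :
    ∃ δ > 0, Ioo (τ - δ) (τ + δ) ⊆ D ∧
      StrictAntiOn (thresholdRegret f c x) (Ioo (τ - δ) (τ + δ)) := by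
  obtain ⟨U, hUopen, hτU, hUD, hU⟩ :
      ∃ U : Set ℝ, IsOpen U ∧ τ ∈ U ∧ U ⊆ D ∧ StrictAntiOn (thresholdRegret f c x) U := by
    rcases hne.lt_or_gt with hlt | hgt
    · exact ⟨Iio τd ∩ D, isOpen_Iio.inter hD, ⟨hlt, hτ⟩, inter_subset_right,
        strictAntiOn_thresholdRegret_Iio hf hτd hc⟩
    · exact ⟨Ioi τd ∩ D, isOpen_Ioi.inter hD, ⟨hgt, hτ⟩, inter_subset_right,
        strictAntiOn_thresholdRegret_Ioi hf hτd hc⟩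
  obtain ⟨δ, hδ, hsub⟩ := exists_Ioo_subset_of_isOpen hUopen hτU
  exact ⟨δ, hδ, hsub.trans hUD, hU.mono hsub⟩

theorem regret_locally_decreasing_s2_general
    (x_q x_u c x : ℝ) (hxq : 0 < x_q) (hxu : 0 < x_u)
    (hx : x = x_q ∨ x = -x_u)
    (s : ℝ → ℝ)
    (hscont : ContinuousOn s (Ioo (-x_u) x_q))
    (hsanti : StrictAntiOn s (Ioo (-x_u) x_q))
    (τd : ℝ) (hτd : τd ∈ Ioo (-x_u) x_q)
    (hcrit : s τd = (x_u + c) / (x_q + x_u))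
    (u : ℝ → ℝ)
    (hu : ∀ τ, u τ = (s τ * (x_q + x_u) - x_u) -
      (if s τ * (x_q + x_u) - x_u > c then (1 : ℝ) else 0) * x) :
    (∀ τ ∈ Ioo (-x_u) x_q, τ ≠ τd →
      ∃ δ > 0, Ioo (τ - δ) (τ + δ) ⊆ Ioo (-x_u) x_q ∧
        StrictAntiOn u (Ioo (τ - δ) (τ + δ))) ∧
    Tendsto u (𝓝[<] τd) (𝓝 (c - x)) ∧
    Tendsto u (𝓝[>] τd) (𝓝 c) ∧
    x ≠ 0 := by
  set N : ℝ → ℝ := fun τ ↦ s τ * (x_q + x_u) - x_u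
  have hS : 0 < x_q + x_u := by linarith
  obtain rfl : u = thresholdRegret N c x := funext hu
  have hNanti : StrictAntiOn N (Ioo (-x_u) x_q) := fun a ha b hb hab ↦
    sub_lt_sub_right (mul_lt_mul_of_pos_right (hsanti ha hb hab) hS) _
  have hNc : N τd = c := by
    simp only [N, hcrit]
    field_simp
    ring
  have hD : Ioo (-x_u) x_q ∈ 𝓝 τd := Ioo_mem_nhds hτd.1 hτd.2
  have hNcont : ContinuousAt N τd :=
    ((hscont.continuousAt hD).mul_const _).sub_const _
  refine ⟨fun τ hτ hne ↦
      exists_Ioo_strictAntiOn_thresholdRegret isOpen_Ioo hNanti hτd hNc hτ hne,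
    tendsto_thresholdRegret_nhdsLT hNanti hD hNcont hNc,
    tendsto_thresholdRegret_nhdsGT hNanti hD hNcont hNc, ?_⟩
  rcases hx with rfl | rfl
  exacts [hxq.ne', neg_ne_zero.2 hxu.ne']

/-- For `s` continuous strictly decreasing on `(−x_u,x_q)`, with critical
prejudice `τᵈ` where `s τᵈ = (x_u+c)/(x_q+x_u)` and regret
`u τ = s τ (x_q+x_u) − x_u − 1{s τ (x_q+x_u) − x_u > c} x`: `u` is locally decreasing at
every `τ ≠ τᵈ` in the domain and has a jump discontinuity at `τᵈ`
(left limit `c − x`, right limit `c`, with `x ≠ 0`). -/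
theorem regret_locally_decreasing_s2
    (x_q x_u c x : ℝ) (hxq : 0 < x_q) (hxu : 0 < x_u)
    (hc : c ∈ Ioo (-x_u) x_q) (hx : x = x_q ∨ x = -x_u)
    (s : ℝ → ℝ)
    (hscont : ContinuousOn s (Ioo (-x_u) x_q))
    (hsanti : StrictAntiOn s (Ioo (-x_u) x_q))
    (τd : ℝ) (hτd : τd ∈ Ioo (-x_u) x_q)
    (hcrit : s τd = (x_u + c) / (x_q + x_u))
    (u : ℝ → ℝ)
    (hu : ∀ τ, u τ = (s τ * (x_q + x_u) - x_u) -
      (if s τ * (x_q + x_u) - x_u > c then (1 : ℝ) else 0) * x) :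
    (∀ τ ∈ Ioo (-x_u) x_q, τ ≠ τd →
      ∃ δ > 0, Ioo (τ - δ) (τ + δ) ⊆ Ioo (-x_u) x_q ∧
        StrictAntiOn u (Ioo (τ - δ) (τ + δ))) ∧
    Tendsto u (𝓝[<] τd) (𝓝 (c - x)) ∧
    Tendsto u (𝓝[>] τd) (𝓝 c) ∧
    x ≠ 0 :=
  regret_locally_decreasing_s2_general x_q x_u c x hxq hxu hx s hscont hsanti τd hτd hcrit u hu
end

section
/- Under the same hypotheses (s₁ continuous strictly increasing, s₂ continuous strictly decreasing, unique crossing at τ* with common value s*, and s₁(τ₁^d) = s₂(τ₂^d) = β with τ₁^d, τ₂^d in the domain), s* < β if and only if τ₁^d > τ₂^d. -/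
open Set

theorem StrictMonoOn.crossing_lt_iff {α γ : Type*} [LinearOrder α] [LinearOrder γ] {S : Set α}
    {f g : α → γ} (hf : StrictMonoOn f S) (hg : StrictAntiOn g S) {x y z : α}
    (hx : x ∈ S) (hy : y ∈ S) (hz : z ∈ S) (hfgx : f x = g x) (hfyz : f y = g z) :
    f x < f y ↔ z < y := by
  have hright : f x < f y ↔ x < y := hf.lt_iff_lt hx hy
  have hleft : f x < f y ↔ z < x := by rw [hfgx, hfyz]; exact hg.lt_iff_gt hx hz
  constructor
  · intro h
    exact (hleft.mp h).trans (hright.mp h)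
  · intro hzy
    rcases lt_or_ge x y with hxy | hyx
    · exact hright.mpr hxy
    · exact hleft.mpr (hzy.trans_le hyx)

theorem critical_prejudice_order_iff_general
    (x_q x_u β : ℝ)
    (s₁ s₂ : ℝ → ℝ)
    (hs₁mono : StrictMonoOn s₁ (Ioo (-x_u) x_q))
    (hs₂anti : StrictAntiOn s₂ (Ioo (-x_u) x_q))
    (τstar sstar : ℝ) (hτstar : τstar ∈ Ioo (-x_u) x_q)
    (h₁star : s₁ τstar = sstar) (h₂star : s₂ τstar = sstar)
    (τ₁d τ₂d : ℝ) (hτ₁d : τ₁d ∈ Ioo (-x_u) x_q) (hτ₂d : τ₂d ∈ Ioo (-x_u) x_q)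
    (h₁d : s₁ τ₁d = β) (h₂d : s₂ τ₂d = β) :
    sstar < β ↔ τ₁d > τ₂d := by
  rw [← h₁star, ← h₁d]
  exact hs₁mono.crossing_lt_iff hs₂anti hτstar hτ₁d hτ₂d (h₁star.trans h₂star.symm)
    (h₁d.trans h₂d.symm)

/-- Under the same hypotheses as the critical-prejudice comparison,
`s* < β ↔ τ₁ᵈ > τ₂ᵈ`. -/
theorem critical_prejudice_order_iff
    (x_q x_u β : ℝ) (hxq : 0 < x_q) (hxu : 0 < x_u) (hβ : β ∈ Ioo (0 : ℝ) 1)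
    (s₁ s₂ : ℝ → ℝ)
    (hs₁mono : StrictMonoOn s₁ (Ioo (-x_u) x_q))
    (hs₂anti : StrictAntiOn s₂ (Ioo (-x_u) x_q))
    (τstar sstar : ℝ) (hτstar : τstar ∈ Ioo (-x_u) x_q)
    (h₁star : s₁ τstar = sstar) (h₂star : s₂ τstar = sstar)
    (τ₁d τ₂d : ℝ) (hτ₁d : τ₁d ∈ Ioo (-x_u) x_q) (hτ₂d : τ₂d ∈ Ioo (-x_u) x_q)
    (h₁d : s₁ τ₁d = β) (h₂d : s₂ τ₂d = β) :
    sstar < β ↔ τ₁d > τ₂d :=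
  critical_prejudice_order_iff_general x_q x_u β s₁ s₂ hs₁mono hs₂anti τstar sstar hτstar h₁star
    h₂star τ₁d τ₂d hτ₁d hτ₂d h₁d h₂d
end

section
/- At the equalizing prejudice τ*, the one-sided limits of regret coincide across algorithms: lim_{τ→τ*⁺} u(s₁(τ)) = lim_{τ→τ*⁻} u(s₂(τ)), where u(s) = s(x_q+x_u) − x_u − 1{s(x_q+x_u) − x_u > c}·x with x ∈ {x_q, −x_u} fixed. -/
open Set Filter Topology

/-!
Both `s₁` (from the right of `τ*`) and `s₂` (from the left) approach the common value `s*`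
strictly from above, so both limits are the right limit of the regret `u` at `s*`. That limit
exists: `u` is an affine function minus a multiple of the indicator of `{s | s (x_q + x_u) - x_u > c}`,
and this indicator is monotone or antitone according to the sign of `x_q + x_u`.
-/

section OneSidedApproach

variable {α β : Type*} [TopologicalSpace α] [LinearOrder α] [TopologicalSpace β] [Preorder β]
  {f : α → β} {U : Set α} {a : α}

theorem StrictMonoOn.tendsto_nhdsGT_nhdsGT (hf : StrictMonoOn f U) (hcont : ContinuousOn f U)
    (hU : U ∈ 𝓝 a) : Tendsto f (𝓝[>] a) (𝓝[>] f a) := by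
  refine tendsto_nhdsWithin_iff.2 ⟨(hcont.continuousAt hU).tendsto.mono_left nhdsWithin_le_nhds, ?_⟩
  filter_upwards [mem_nhdsWithin_of_mem_nhds hU, self_mem_nhdsWithin] with τ hτ hτa
  exact hf (mem_of_mem_nhds hU) hτ hτa

theorem StrictAntiOn.tendsto_nhdsLT_nhdsGT (hf : StrictAntiOn f U) (hcont : ContinuousOn f U)
    (hU : U ∈ 𝓝 a) : Tendsto f (𝓝[<] a) (𝓝[>] f a) := by
  refine tendsto_nhdsWithin_iff.2 ⟨(hcont.continuousAt hU).tendsto.mono_left nhdsWithin_le_nhds, ?_⟩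
  filter_upwards [mem_nhdsWithin_of_mem_nhds hU, self_mem_nhdsWithin] with τ hτ hτa
  exact hf hτ (mem_of_mem_nhds hU) hτa

end OneSidedApproach

theorem exists_tendsto_nhdsGT_step_affine (A b c a : ℝ) :
    ∃ m, Tendsto (fun s : ℝ => if s * A - b > c then (1 : ℝ) else 0) (𝓝[>] a) (𝓝 m) := by
  rcases le_total 0 A with hA | hA
  · have hmono : Monotone fun s : ℝ => if s * A - b > c then (1 : ℝ) else 0 := by
      intro s t hst
      have : s * A ≤ t * A := mul_le_mul_of_nonneg_right hst hA
      dsimp only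
      split_ifs <;> linarith
    exact ⟨_, hmono.tendsto_nhdsGT a⟩
  · have hanti : Antitone fun s : ℝ => if s * A - b > c then (1 : ℝ) else 0 := by
      intro s t hst
      have : t * A ≤ s * A := mul_le_mul_of_nonpos_right hst hA
      dsimp only
      split_ifs <;> linarith
    exact ⟨_, hanti.tendsto_nhdsGT a⟩

theorem exists_tendsto_nhdsGT_affine_sub_step (A b c x a : ℝ) :
    ∃ l, Tendsto (fun s : ℝ => (s * A - b) - (if s * A - b > c then (1 : ℝ) else 0) * x)
      (𝓝[>] a) (𝓝 l) := by
  obtain ⟨m, hm⟩ := exists_tendsto_nhdsGT_step_affine A b c a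
  have haffine : Tendsto (fun s : ℝ => s * A - b) (𝓝[>] a) (𝓝 (a * A - b)) :=
    ((continuous_id.mul continuous_const).sub continuous_const).continuousAt.tendsto.mono_left
      nhdsWithin_le_nhds
  exact ⟨_, haffine.sub (hm.mul_const x)⟩

theorem regret_one_sided_limits_match_general
    (x_q x_u c x : ℝ)
    (s₁ s₂ : ℝ → ℝ)
    (hs₁cont : ContinuousOn s₁ (Ioo (-x_u) x_q))
    (hs₂cont : ContinuousOn s₂ (Ioo (-x_u) x_q))
    (hs₁mono : StrictMonoOn s₁ (Ioo (-x_u) x_q))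
    (hs₂anti : StrictAntiOn s₂ (Ioo (-x_u) x_q))
    (τstar : ℝ) (hτstar : τstar ∈ Ioo (-x_u) x_q)
    (hcross : s₁ τstar = s₂ τstar)
    (u : ℝ → ℝ)
    (hu : ∀ s, u s = (s * (x_q + x_u) - x_u) -
      (if s * (x_q + x_u) - x_u > c then (1 : ℝ) else 0) * x) :
    ∃ l : ℝ, Tendsto (fun τ => u (s₁ τ)) (𝓝[>] τstar) (𝓝 l) ∧
      Tendsto (fun τ => u (s₂ τ)) (𝓝[<] τstar) (𝓝 l) := by
  obtain ⟨l, hl⟩ := exists_tendsto_nhdsGT_affine_sub_step (x_q + x_u) x_u c x (s₁ τstar)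
  rw [← funext hu] at hl
  have hU : Ioo (-x_u) x_q ∈ 𝓝 τstar := isOpen_Ioo.mem_nhds hτstar
  refine ⟨l, hl.comp (hs₁mono.tendsto_nhdsGT_nhdsGT hs₁cont hU), ?_⟩
  rw [hcross] at hl
  exact hl.comp (hs₂anti.tendsto_nhdsLT_nhdsGT hs₂cont hU)

/-- At the equalizing prejudice `τ*`, the one-sided limits of regret coincide
across the two algorithms: `lim_{τ→τ*⁺} u (s₁ τ) = lim_{τ→τ*⁻} u (s₂ τ)`, where
`u s = s(x_q+x_u) − x_u − 1{s(x_q+x_u) − x_u > c} x`. -/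
theorem regret_one_sided_limits_match
    (x_q x_u c x : ℝ) (hxq : 0 < x_q) (hxu : 0 < x_u)
    (hc : c ∈ Ioo (-x_u) x_q) (hx : x = x_q ∨ x = -x_u)
    (s₁ s₂ : ℝ → ℝ)
    (hs₁cont : ContinuousOn s₁ (Ioo (-x_u) x_q))
    (hs₂cont : ContinuousOn s₂ (Ioo (-x_u) x_q))
    (hs₁mono : StrictMonoOn s₁ (Ioo (-x_u) x_q))
    (hs₂anti : StrictAntiOn s₂ (Ioo (-x_u) x_q))
    (τstar : ℝ) (hτstar : τstar ∈ Ioo (-x_u) x_q)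
    (hcross : s₁ τstar = s₂ τstar)
    (u : ℝ → ℝ)
    (hu : ∀ s, u s = (s * (x_q + x_u) - x_u) -
      (if s * (x_q + x_u) - x_u > c then (1 : ℝ) else 0) * x) :
    ∃ l : ℝ, Tendsto (fun τ => u (s₁ τ)) (𝓝[>] τstar) (𝓝 l) ∧
      Tendsto (fun τ => u (s₂ τ)) (𝓝[<] τstar) (𝓝 l) :=
  regret_one_sided_limits_match_general x_q x_u c x s₁ s₂ hs₁cont hs₂cont hs₁mono hs₂anti τstar
    hτstar hcross u hu
end
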